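/- arXiv:1902.06572 — 4 statements merged into one kernel-verified Lean document; each statement's English description precedes it below -/
import Mathlib

section
/- Let C be a small category with binary products and let I be an object of C. The exponentiation functor (−)^{y(I)} on the category of type-valued presheaves on C, i.e. the functor exp (yoneda.obj I) : (Cᵒᵖ ⥤ Type) ⥤ (Cᵒᵖ ⥤ Type) given by the cartesian closed structure, has a right adjoint (equivalently, it is a left adjoint, hence preserves all colimits). -/
/-!
For presheaves, `Y ^ y(I)` evaluated at `c` is `Hom(y(I) × y(c), Y) ≅ Hom(y(I ⨯ c), Y) ≅ Y(I ⨯ c)`,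
so exponentiation by `y(I)` is precomposition with `(I ⨯ -)ᵒᵖ`, whose right adjoint is right Kan
extension.
-/

open CategoryTheory CategoryTheory.Limits MonoidalCategory Opposite

universe w v u

section

variable {C : Type u} [Category.{v} C]

lemma map_op_map_op_apply_of_comp_eq {X : Cᵒᵖ ⥤ Type w} {a b d : C} {f : b ⟶ a} {g : d ⟶ b}
    {k : d ⟶ a} (h : g ≫ f = k) (x : X.obj (op a)) :
    X.map g.op (X.map f.op x) = X.map k.op x := by
  rw [← Functor.map_comp_apply, ← op_comp, h]

noncomputable def tensorLeftYonedaAdjunction [HasBinaryProducts C] (I : C) :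
    tensorLeft (yoneda.obj I) ⊣
      (Functor.whiskeringLeft Cᵒᵖ Cᵒᵖ (Type v)).obj (prod.functor.obj I).op where
  unit :=
    { app X :=
        { app c := TypeCat.ofHom fun x =>
            ((prod.fst : I ⨯ c.unop ⟶ I), X.map (prod.snd (X := I)).op x)
          naturality c d f := by
            ext x
            refine Prod.ext ((prod.map_fst (𝟙 I) f.unop).trans (Category.comp_id _)).symm ?_
            exact (map_op_map_op_apply_of_comp_eq rfl x).trans
              (map_op_map_op_apply_of_comp_eq (prod.map_snd (𝟙 I) f.unop) x).symm }
      naturality X Y φ := by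
        ext c x
        refine Prod.ext rfl ?_
        exact (NatTrans.naturality_apply φ (prod.snd : I ⨯ c.unop ⟶ c.unop).op x).symm }
  counit :=
    { app Y :=
        { app c := TypeCat.ofHom fun (p : (c.unop ⟶ I) × Y.obj (op (I ⨯ c.unop))) =>
            Y.map (prod.lift p.1 (𝟙 c.unop)).op p.2
          naturality c d f := by
            ext ⟨g, y⟩
            have h : prod.lift (f.unop ≫ g) (𝟙 d.unop) ≫ prod.map (𝟙 I) f.unop =
                f.unop ≫ prod.lift g (𝟙 c.unop) := by
              apply prod.hom_ext <;> simp
            exact (map_op_map_op_apply_of_comp_eq h y).trans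
              (map_op_map_op_apply_of_comp_eq (X := Y) (g := f.unop) rfl y).symm }
      naturality X Y φ := by
        ext c ⟨g, y⟩
        exact (NatTrans.naturality_apply φ (prod.lift g (𝟙 c.unop)).op y).symm }
  left_triangle_components X := by
    ext c ⟨g, x⟩
    refine Prod.ext (prod.lift_fst _ _) ?_
    exact (map_op_map_op_apply_of_comp_eq (prod.lift_snd _ _) x).trans (Functor.map_id_apply X c x)
  right_triangle_components Y := by
    ext c y
    have h : prod.lift (prod.fst : I ⨯ c.unop ⟶ I) (𝟙 _) ≫ prod.map (𝟙 I) prod.snd = 𝟙 _ := by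
      apply prod.hom_ext <;> simp
    exact (map_op_map_op_apply_of_comp_eq h y).trans (Functor.map_id_apply Y _ y)

end

/-- For a small category `C` with binary products and an object `I` of `C`,
the exponentiation functor `exp (yoneda.obj I)` on presheaves `Cᵒᵖ ⥤ Type` has a right
adjoint, i.e. it is a left adjoint functor. -/
theorem exp_yoneda_isLeftAdjoint
    {C : Type} [SmallCategory C] [HasBinaryProducts C] (I : C) :
    (ihom (yoneda.obj I) : (Cᵒᵖ ⥤ Type) ⥤ (Cᵒᵖ ⥤ Type)).IsLeftAdjoint := by
  have : ((Functor.whiskeringLeft Cᵒᵖ Cᵒᵖ Type).obj (prod.functor.obj I).op).IsLeftAdjoint :=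
    ⟨_, ⟨(prod.functor.obj I).op.ranAdjunction Type⟩⟩
  exact Functor.isLeftAdjoint_of_iso
    ((tensorLeftYonedaAdjunction I).rightAdjointUniq (ihom.adjunction (yoneda.obj I)))
end

section
/- Let C be a small category with binary products, I an object of C, and S a type. The canonical morphism from the constant presheaf Δ(S) on Cᵒᵖ with value S to the exponential Δ(S)^{y(I)} — namely the exponential transpose of the first projection Δ(S) ⨯ y(I) ⟶ Δ(S) — is an isomorphism of presheaves. In particular, the exponential of a constant presheaf by a representable presheaf is again (isomorphic to) that constant presheaf. -/
open CategoryTheory CategoryTheory.Limits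

/-! Maps into a constant presheaf `Δ S` are, through `colim ⊣ Δ`, maps out of the set of connected
components `colim T`. As `C` has binary products, `Cᵒᵖ` is sifted, so `colim` preserves binary
products, and `colim y(I)` is a point: every `f : c ⟶ I` is glued to `𝟙 I` along `f`. Hence
precomposing with `snd : y(I) ⊗ T ⟶ T` is a bijection on maps into `Δ S`; after currying this is
precomposition with the transpose of `snd`, which is therefore invertible by Yoneda. -/

open Opposite CartesianMonoidalCategory

universe u

section Sifted

variable {J : Type u} [SmallCategory J] [IsSifted J] (X Y : J ⥤ Type u) [Unique (colimit X)]

instance isIso_colim_map_snd : IsIso (colim.map (snd X Y)) := by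
  rw [← CartesianMonoidalCategory.prodComparison_snd]
  have : IsIso (snd (colim.obj X) (colim.obj Y)) :=
    (isIso_iff_bijective _).2 (Equiv.uniqueProd (colimit Y) (colimit X)).bijective
  infer_instance

theorem bijective_snd_comp_const (S : Type u) :
    Function.Bijective fun g : Y ⟶ (Functor.const J).obj S => snd X Y ≫ g :=
  (colimConstAdj.map_comp_bijective_iff _ S).1
    (asIso (colim.map (snd X Y))).symm.homFromEquiv.bijective

end Sifted

noncomputable instance uniqueColimitYoneda {C : Type u} [SmallCategory C] (I : C) :
    Unique (colimit (yoneda.obj I)) where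
  default := colimit.ι (yoneda.obj I) (op I) (𝟙 I)
  uniq x := by
    obtain ⟨c, f, rfl⟩ := Types.jointly_surjective' x
    exact (Types.colimit_sound f.op (by simp)).symm

/-- Let `C` be a small category with binary products, `I : C`, and `S` a type.
The canonical morphism from the constant presheaf `Δ(S)` to the exponential `Δ(S) ^ y(I)`,
namely the exponential transpose of the projection `Δ(S) ⨯ y(I) ⟶ Δ(S)` (written here with
the chosen product `y(I) ⊗ Δ(S)` of the cartesian closed structure on presheaves), is an
isomorphism of presheaves: the exponential of a constant presheaf by a representable presheaf
is again that constant presheaf. -/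
theorem const_to_exp_yoneda_isIso
    {C : Type} [SmallCategory C] [HasBinaryProducts C] (I : C) (S : Type) :
    IsIso (MonoidalClosed.curry
        (CartesianMonoidalCategory.snd (yoneda.obj I) ((Functor.const Cᵒᵖ).obj S)) :
      (Functor.const Cᵒᵖ).obj S ⟶ (ihom (yoneda.obj I)).obj ((Functor.const Cᵒᵖ).obj S)) := by
  have : Nonempty Cᵒᵖ := ⟨op I⟩
  refine isIso_of_yoneda_map_bijective _ fun T => ?_
  have transpose : (fun g : T ⟶ (Functor.const Cᵒᵖ).obj S => g ≫ MonoidalClosed.curry (snd _ _)) =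
      MonoidalClosed.curry ∘ fun g => snd (yoneda.obj I) T ≫ g := by
    funext g
    simp [← MonoidalClosed.curry_natural_left]
  rw [transpose]
  exact ((ihom.adjunction _).homEquiv _ _).bijective.comp (bijective_snd_comp_const _ _ S)
end

section
/- A morphism p : X ⟶ Y of simplicial sets has the right lifting property with respect to every monomorphism of simplicial sets if and only if it has the right lifting property with respect to every boundary inclusion ∂Δ[n] ⟶ Δ[n] for all n ≥ 0. -/
/-!
Filtering the target of a monomorphism `A ⟶ B` by `A` together with the skeleta of `B`
attaches, at each stage, one copy of `Δ[n]` along `∂Δ[n]` for every nondegenerate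
`n`-simplex of `B` outside `A` (`SSet.relativeCellComplexOfMono`). Right lifting properties
pass to coproducts, pushouts and transfinite compositions of the maps they lift against.
-/

open CategoryTheory SSet MorphismProperty

/-- A morphism of simplicial sets has the right lifting property with
respect to every monomorphism if and only if it has the right lifting property with respect
to every boundary inclusion `∂Δ[n] ⟶ Δ[n]`. -/
theorem rlp_monomorphisms_iff_rlp_boundaryInclusions
    {X Y : SSet} (p : X ⟶ Y) :
    (∀ {A B : SSet} (i : A ⟶ B) [Mono i], HasLiftingProperty i p) ↔
      (∀ n : ℕ, HasLiftingProperty (boundary n).ι p) :=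
  calc (∀ {A B : SSet} (i : A ⟶ B) [Mono i], HasLiftingProperty i p)
      ↔ (monomorphisms SSet).rlp p := ⟨fun h _ _ i _ => h i, fun h _ _ i _ => h i ‹_›⟩
    _ ↔ modelCategoryQuillen.I.rlp p := by rw [SSet.rlp_monomorphisms]
    _ ↔ ∀ n : ℕ, HasLiftingProperty (boundary n).ι p :=
      ⟨fun h n => h _ (modelCategoryQuillen.boundary_ι_mem_I n), fun h _ _ _ ⟨n⟩ => h n⟩
end

section
/- Let I be a type, A : I → Type a family, B : ∀ i, A i → Type a doubly-indexed family, and s : ∀ i (a : A i), B i a → I. Consider the endofunctor F on the product category of I-indexed families of types given on objects by (F X) i = Σ (a : A i), ∀ (b : B i a), X (s i a b), with the evident action on morphisms. Then the category of F-algebras has an initial object (the indexed inductive type W_{I,A,B,s}); i.e., there exists an I-indexed family W together with an algebra structure sup : ∀ i, (Σ (a : A i), ∀ b, W (s i a b)) → W i such that for every F-algebra there is a unique algebra morphism from (W, sup) to it. -/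
open CategoryTheory

/-!
The initial algebra is the indexed W-type `IW A B s` (the paper's `W_{I,A,B,s}`). The algebra
morphism out of it into an algebra `X` is forced by the structure map of `X`, so it is defined by
structural recursion, and any other morphism agrees with it by induction on trees.
-/

universe u

/-- The indexed polynomial endofunctor `⟦I, A, B, s⟧` on the category of `I`-indexed
families of types, sending a family `X` to the family
`i ↦ Σ (a : A i), ∀ (b : B i a), X (s i a b)`. -/
def polynomialEndofunctor {I : Type u} (A : I → Type u) (B : ∀ i, A i → Type u)
    (s : ∀ i (a : A i), B i a → I) :
    (∀ _ : I, Type u) ⥤ (∀ _ : I, Type u) where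
  obj X i := Σ a : A i, ∀ b : B i a, X (s i a b)
  map f i := TypeCat.ofHom fun x => ⟨x.1, fun b => f (s i x.1 b) (x.2 b)⟩

inductive IW {I : Type u} (A : I → Type u) (B : ∀ i, A i → Type u)
    (s : ∀ i (a : A i), B i a → I) : I → Type u where
  | sup (i : I) (a : A i) (f : ∀ b : B i a, IW A B s (s i a b)) : IW A B s i

namespace IW

variable {I : Type u} {A : I → Type u} {B : ∀ i, A i → Type u} {s : ∀ i (a : A i), B i a → I}

variable (A B s) in
def algebra : Endofunctor.Algebra (polynomialEndofunctor A B s) where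
  a := IW A B s
  str i := TypeCat.ofHom fun x => sup i x.1 x.2

variable (X : Endofunctor.Algebra (polynomialEndofunctor A B s))

def lift : ∀ i, IW A B s i → X.a i
  | _, sup i a f => X.str i ⟨a, fun b => lift (s i a b) (f b)⟩

def liftHom : algebra A B s ⟶ X where
  f i := TypeCat.ofHom (lift X i)
  h := by
    funext i
    ext x
    rfl

theorem hom_apply_eq_lift (g : algebra A B s ⟶ X) {i : I} (w : IW A B s i) :
    g.f i w = lift X i w := by
  induction w with
  | sup i a f ih =>
    have hg : g.f i (sup i a f) = X.str i ⟨a, fun b => g.f (s i a b) (f b)⟩ :=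
      (ConcreteCategory.congr_hom (congrFun g.h i) ⟨a, f⟩).symm
    rw [hg, lift, funext ih]

theorem hom_eq_liftHom (g : algebra A B s ⟶ X) : g = liftHom X := by
  ext i w
  exact hom_apply_eq_lift X g w

variable (A B s) in
def isInitial : Limits.IsInitial (algebra A B s) :=
  Limits.IsInitial.ofUniqueHom liftHom hom_eq_liftHom

end IW

/-- The category of algebras for the indexed polynomial endofunctor
`⟦I, A, B, s⟧` has an initial object: the indexed inductive type `W_{I,A,B,s}` together with
its constructor `sup`, from which there is a unique algebra morphism to any other algebra. -/
theorem polynomialEndofunctor_hasInitialAlgebra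
    {I : Type u} (A : I → Type u) (B : ∀ i, A i → Type u)
    (s : ∀ i (a : A i), B i a → I) :
    Limits.HasInitial (Endofunctor.Algebra (polynomialEndofunctor A B s)) :=
  (IW.isInitial A B s).hasInitial
end
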